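/- (Comparison function lemma) Under the hypotheses of Lemma 2.1, there exists v : closure(B_R(0) \ B_{R−ε}(0)) → [0,m] such that: (i) v = 0 on ∂B_R(0), v = m on ∂B_{R−ε}(0), and v > 0 on the open annulus; (ii) v ∈ C¹ up to the closure and C² in the interior; (iii) L[v] > 0 on the open annulus; (iv) the outward normal derivative of v on ∂B_R(0) equals −m/f(ε) < 0. -/

import Mathlib

open Set Metric MeasureTheory

/-! The comparison function is radial, `v x = C * g (R - ‖x‖)` with `C = m / f ε` and
`g r = r + k ∫₀ʳ ∫₀ˢ Λ`, where `Λ` is cut off outside `(0, ε]` so that `g` is `C¹` on all of `ℝ`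
and agrees with `f` on `[0, ε]`. For `u x = φ ‖x‖` the operator reads
`φ'/ρ · tr a + (φ'' - φ'/ρ)/ρ² · ⟨a x, x⟩ + φ'/ρ · ⟨b, x⟩ + c u` at `ρ = ‖x‖`. Here
`φ'' = C k Λ (R - ρ) ≥ 0`, and since `k ∫ Λ ≤ 1` the slope `-φ'` lies in `[C, 2C]` and
`0 ≤ v ≤ 2C (R - ρ)`. Ellipticity gives `⟨a x, x⟩ ≥ ρ²` and `tr a ≤ n Λ`; with `ρ > R/2` the
negative terms add up to at most `C Λ (4n/R + 2n + 2)`, which the choice of `k` beats by `C Λ`. -/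

/-- `pd i u` is the `i`-th partial derivative of `u`. -/
noncomputable def pd {n : ℕ} (i : Fin n) (u : EuclideanSpace ℝ (Fin n) → ℝ) :
    EuclideanSpace ℝ (Fin n) → ℝ :=
  fun x => fderiv ℝ u x (EuclideanSpace.single i 1)

noncomputable def profile (k : ℝ) (w : ℝ → ℝ) (r : ℝ) : ℝ :=
  r + k * ∫ s in (0 : ℝ)..r, ∫ t in (0 : ℝ)..s, w t

section Profile

variable {k : ℝ} {w : ℝ → ℝ}

theorem continuous_primitive_zero (hw : Integrable w) :
    Continuous fun s => ∫ t in (0 : ℝ)..s, w t :=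
  intervalIntegral.continuous_primitive (fun _ _ => hw.intervalIntegrable) 0

theorem primitive_nonneg (hw0 : ∀ t, 0 ≤ w t) {s : ℝ} (hs : 0 ≤ s) :
    0 ≤ ∫ t in (0 : ℝ)..s, w t :=
  intervalIntegral.integral_nonneg hs fun t _ => hw0 t

theorem primitive_le_integral (hw : Integrable w) (hw0 : ∀ t, 0 ≤ w t) {s : ℝ} (hs : 0 ≤ s) :
    ∫ t in (0 : ℝ)..s, w t ≤ ∫ t, w t := by
  rw [intervalIntegral.integral_of_le hs]
  exact setIntegral_le_integral hw (Filter.Eventually.of_forall hw0)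

@[simp] theorem profile_zero : profile k w 0 = 0 := by simp [profile]

theorem hasDerivAt_profile (hw : Integrable w) (r : ℝ) :
    HasDerivAt (profile k w) (1 + k * ∫ t in (0 : ℝ)..r, w t) r :=
  (hasDerivAt_id r).add
    (((continuous_primitive_zero hw).integral_hasStrictDerivAt 0 r).hasDerivAt.const_mul k)

theorem contDiff_profile (hw : Integrable w) : ContDiff ℝ 1 (profile k w) := by
  rw [contDiff_one_iff_deriv, funext fun r => (hasDerivAt_profile (k := k) hw r).deriv]
  exact ⟨fun r => (hasDerivAt_profile hw r).differentiableAt,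
    continuous_const.add (continuous_const.mul (continuous_primitive_zero hw))⟩

theorem hasDerivAt_primitive (hw : Integrable w) {r : ℝ} (hwr : ContinuousAt w r) :
    HasDerivAt (fun s => ∫ t in (0 : ℝ)..s, w t) (w r) r :=
  intervalIntegral.integral_hasDerivAt_right hw.intervalIntegrable
    hw.aestronglyMeasurable.stronglyMeasurableAtFilter hwr

theorem contDiffOn_profile_two (hw : Integrable w) {U : Set ℝ} (hU : IsOpen U)
    (hwU : ContinuousOn w U) : ContDiffOn ℝ 2 (profile k w) U := by
  have hderiv : deriv (profile k w) = fun r => 1 + k * ∫ t in (0 : ℝ)..r, w t :=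
    funext fun r => (hasDerivAt_profile hw r).deriv
  have hslope : ∀ r ∈ U, HasDerivAt (fun r => 1 + k * ∫ t in (0 : ℝ)..r, w t) (k * w r) r :=
    fun r hr =>
      ((hasDerivAt_primitive hw (hwU.continuousAt (hU.mem_nhds hr))).const_mul k).const_add 1
  rw [show (2 : WithTop ℕ∞) = 1 + 1 from rfl, contDiffOn_succ_iff_deriv_of_isOpen hU, hderiv,
    show (1 : WithTop ℕ∞) = 0 + 1 from rfl, contDiffOn_succ_iff_deriv_of_isOpen hU, contDiffOn_zero]
  refine ⟨fun r _ => (hasDerivAt_profile hw r).differentiableAt.differentiableWithinAt, by simp,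
    fun r hr => (hslope r hr).differentiableAt.differentiableWithinAt, by simp, ?_⟩
  exact (continuousOn_const.mul hwU).congr fun r hr => (hslope r hr).deriv

theorem le_profile (hk : 0 ≤ k) (hw0 : ∀ t, 0 ≤ w t) {r : ℝ} (hr : 0 ≤ r) : r ≤ profile k w r :=
  le_add_of_nonneg_right <| mul_nonneg hk <|
    intervalIntegral.integral_nonneg hr fun _ hs => primitive_nonneg hw0 hs.1

theorem profile_le_two_mul (hw : Integrable w) (hk : 0 ≤ k) (hw0 : ∀ t, 0 ≤ w t)
    (hkw : k * ∫ t, w t ≤ 1) {r : ℝ} (hr : 0 ≤ r) : profile k w r ≤ 2 * r := by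
  have h : ∫ s in (0 : ℝ)..r, ∫ t in (0 : ℝ)..s, w t ≤ r * ∫ t, w t := by
    simpa using intervalIntegral.integral_mono_on (μ := volume) hr
      ((continuous_primitive_zero hw).intervalIntegrable 0 r) intervalIntegrable_const
      fun s hs => primitive_le_integral hw hw0 hs.1
  have := mul_le_mul_of_nonneg_left h hk
  rw [profile]
  nlinarith

theorem monotoneOn_profile (hw : Integrable w) (hk : 0 ≤ k) (hw0 : ∀ t, 0 ≤ w t) :
    MonotoneOn (profile k w) (Ici 0) := by
  refine monotoneOn_of_deriv_nonneg (convex_Ici 0) (contDiff_profile hw).continuous.continuousOn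
    (fun r _ => (hasDerivAt_profile hw r).differentiableAt.differentiableWithinAt) ?_
  intro r hr
  rw [interior_Ici] at hr
  rw [(hasDerivAt_profile hw r).deriv]
  have := mul_nonneg hk (primitive_nonneg hw0 hr.le)
  linarith

theorem profile_indicator_Ioc {ε : ℝ} {Λ : ℝ → ℝ} {r : ℝ} (hr : 0 ≤ r) (hrε : r ≤ ε) :
    profile k ((Ioc 0 ε).indicator Λ) r = r + k * ∫ s in Ioc 0 r, ∫ t in Ioc 0 s, Λ t := by
  rw [profile, intervalIntegral.integral_of_le hr]
  congr 2
  refine setIntegral_congr_fun measurableSet_Ioc fun s hs => ?_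
  rw [intervalIntegral.integral_of_le hs.1.le, setIntegral_indicator measurableSet_Ioc,
    inter_eq_left.2 (Ioc_subset_Ioc_right (hs.2.trans hrε))]

end Profile

section Radial

variable {E : Type*} [NormedAddCommGroup E] [InnerProductSpace ℝ E]

theorem hasFDerivAt_norm {x : E} (hx : x ≠ 0) :
    HasFDerivAt (fun y : E => ‖y‖) (‖x‖⁻¹ • innerSL ℝ x) x := by
  have hsqrt := (Real.hasDerivAt_sqrt (pow_pos (norm_pos_iff.2 hx) 2).ne').comp_hasFDerivAt x
    (hasStrictFDerivAt_norm_sq x).hasFDerivAt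
  simp only [Function.comp_def, Real.sqrt_sq (norm_nonneg _)] at hsqrt
  refine hsqrt.congr_fderiv ?_
  ext y
  simp only [smul_apply, smul_eq_mul, nsmul_eq_mul, Nat.cast_ofNat]
  field_simp

theorem hasFDerivAt_comp_norm {φ : ℝ → ℝ} {φ' : ℝ} {x : E} (hx : x ≠ 0)
    (hφ : HasDerivAt φ φ' ‖x‖) :
    HasFDerivAt (fun y => φ ‖y‖) ((φ' / ‖x‖) • innerSL ℝ x) x := by
  simpa only [Function.comp_def, div_eq_mul_inv, smul_smul] using
    hφ.comp_hasFDerivAt x (hasFDerivAt_norm hx)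

theorem fderivWithin_comp_norm_apply_self {φ : ℝ → ℝ} {φ' : ℝ} {s : Set E} {x : E} (hx : x ≠ 0)
    (hφ : HasDerivAt φ φ' ‖x‖) (hs : UniqueDiffWithinAt ℝ s x) :
    fderivWithin ℝ (fun y => φ ‖y‖) s x (‖x‖⁻¹ • x) = φ' := by
  rw [(hasFDerivAt_comp_norm hx hφ).hasFDerivWithinAt.fderivWithin hs]
  simp only [smul_apply, innerSL_apply_apply, real_inner_smul_right,
    real_inner_self_eq_norm_sq, smul_eq_mul]
  field_simp

end Radial

section Shell

variable {E : Type*} [NormedAddCommGroup E]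

theorem closure_shell_subset {r R : ℝ} :
    closure {y : E | r < ‖y‖ ∧ ‖y‖ < R} ⊆ {y | r ≤ ‖y‖ ∧ ‖y‖ ≤ R} :=
  closure_minimal (fun _ hy => ⟨hy.1.le, hy.2.le⟩)
    ((isClosed_le continuous_const continuous_norm).inter
      (isClosed_le continuous_norm continuous_const))

variable [NormedSpace ℝ E]

theorem uniqueDiffWithinAt_shell {r R : ℝ} (hr : 0 ≤ r) (hrR : r < R) {x : E} (hx : ‖x‖ = R) :
    UniqueDiffWithinAt ℝ {y | r < ‖y‖ ∧ ‖y‖ < R} x := by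
  -- a ball of radius `δ` inside the shell, touching the outer sphere at `x`
  set δ := (R - r) / 2
  have hδ : 0 < δ := by positivity
  have hδR : δ < R := by simp only [δ]; linarith
  have hrδ : R - 2 * δ = r := by simp only [δ]; ring
  set c := (1 - δ / R) • x
  have hc : ‖c‖ = R - δ := by
    rw [norm_smul, hx, Real.norm_of_nonneg (by rw [sub_nonneg, div_le_one (by linarith)]; linarith)]
    field_simp [(hδ.trans hδR).ne']
  have hxc : ‖x - c‖ = δ := by
    rw [show x - c = (δ / R) • x by simp only [c, sub_smul, one_smul]; abel, norm_smul, hx,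
      Real.norm_of_nonneg (div_nonneg hδ.le (hδ.trans hδR).le)]
    field_simp [(hδ.trans hδR).ne']
  have hball : ball c δ ⊆ {y | r < ‖y‖ ∧ ‖y‖ < R} := fun y hy => by
    have := abs_norm_sub_norm_le y c
    rw [mem_ball, dist_eq_norm] at hy
    constructor <;> [linarith [neg_abs_le (‖y‖ - ‖c‖)]; linarith [le_abs_self (‖y‖ - ‖c‖)]]
  refine (uniqueDiffWithinAt_convex (convex_ball c δ) ?_ ?_).mono hball
  · rw [isOpen_ball.interior_eq]; exact nonempty_ball.2 hδ
  · rw [closure_ball c hδ.ne', mem_closedBall, dist_eq_norm, hxc]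

theorem ball_diff_closure_ball {r R : ℝ} (hr : r ≠ 0) :
    ball (0 : E) R \ closure (ball 0 r) = {y | r < ‖y‖ ∧ ‖y‖ < R} := by
  ext y
  simp [closure_ball (0 : E) hr, and_comm]

end Shell

section Euclidean

variable {n : ℕ}

theorem pd_comp_norm {φ φ' : ℝ → ℝ} {x : EuclideanSpace ℝ (Fin n)} (hx : x ≠ 0)
    (hφ : HasDerivAt φ (φ' ‖x‖) ‖x‖) (i : Fin n) :
    pd i (fun y => φ ‖y‖) x = φ' ‖x‖ / ‖x‖ * x i := by
  simp [pd, (hasFDerivAt_comp_norm hx hφ).fderiv, EuclideanSpace.inner_single_right]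

theorem pd_pd_comp_norm {φ φ' : ℝ → ℝ} {φ'' : ℝ} {x : EuclideanSpace ℝ (Fin n)} (hx : x ≠ 0)
    (hφ : ∀ ρ, 0 < ρ → HasDerivAt φ (φ' ρ) ρ) (hφ' : HasDerivAt φ' φ'' ‖x‖) (i j : Fin n) :
    pd i (pd j (fun y => φ ‖y‖)) x =
      φ' ‖x‖ / ‖x‖ * (if i = j then 1 else 0) + (φ'' - φ' ‖x‖ / ‖x‖) / ‖x‖ ^ 2 * (x i * x j) := by
  have hr : ‖x‖ ≠ 0 := norm_ne_zero_iff.2 hx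
  have hpd : pd j (fun y => φ ‖y‖) =ᶠ[nhds x] fun y => φ' ‖y‖ / ‖y‖ * y j := by
    filter_upwards [isOpen_ne.mem_nhds hx] with y hy
    exact pd_comp_norm hy (hφ _ (norm_pos_iff.2 hy)) j
  have hψ : HasDerivAt (fun ρ => φ' ρ / ρ) ((φ'' * ‖x‖ - φ' ‖x‖ * 1) / ‖x‖ ^ 2) ‖x‖ :=
    hφ'.div (hasDerivAt_id _) hr
  have hD : HasFDerivAt (fun y : EuclideanSpace ℝ (Fin n) => φ' ‖y‖ / ‖y‖ * y j) _ x :=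
    (hasFDerivAt_comp_norm hx hψ).mul (PiLp.hasFDerivAt_apply 2 x j)
  rw [pd, hpd.fderiv_eq, hD.fderiv]
  by_cases hij : i = j
  · subst hij; simp [EuclideanSpace.inner_single_right]; field_simp
  · simp [EuclideanSpace.inner_single_right, hij, Ne.symm hij]; field_simp

noncomputable def ellipticOp (a : Fin n → Fin n → EuclideanSpace ℝ (Fin n) → ℝ)
    (b : Fin n → EuclideanSpace ℝ (Fin n) → ℝ) (c : EuclideanSpace ℝ (Fin n) → ℝ)
    (u : EuclideanSpace ℝ (Fin n) → ℝ) (x : EuclideanSpace ℝ (Fin n)) : ℝ :=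
  (∑ i, ∑ j, a i j x * pd i (pd j u) x) + (∑ i, b i x * pd i u x) + c x * u x

theorem ellipticOp_comp_norm {a : Fin n → Fin n → EuclideanSpace ℝ (Fin n) → ℝ}
    {b : Fin n → EuclideanSpace ℝ (Fin n) → ℝ} {c : EuclideanSpace ℝ (Fin n) → ℝ}
    {φ φ' : ℝ → ℝ} {φ'' : ℝ} {x : EuclideanSpace ℝ (Fin n)} (hx : x ≠ 0)
    (hφ : ∀ ρ, 0 < ρ → HasDerivAt φ (φ' ρ) ρ) (hφ' : HasDerivAt φ' φ'' ‖x‖) :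
    ellipticOp a b c (fun y => φ ‖y‖) x =
      φ' ‖x‖ / ‖x‖ * ∑ i, a i i x
        + (φ'' - φ' ‖x‖ / ‖x‖) / ‖x‖ ^ 2 * ∑ i, ∑ j, a i j x * x i * x j
        + φ' ‖x‖ / ‖x‖ * ∑ i, b i x * x i + c x * φ ‖x‖ := by
  simp only [ellipticOp, pd_pd_comp_norm hx hφ hφ', pd_comp_norm hx (hφ _ (norm_pos_iff.2 hx)),
    mul_add, Finset.sum_add_distrib, Finset.mul_sum, mul_ite, mul_one, mul_zero,
    Finset.sum_ite_eq, Finset.mem_univ, if_true]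
  refine congrArg₂ _ (congrArg₂ _ (congrArg₂ _ ?_ ?_) ?_) rfl
  · exact Finset.sum_congr rfl fun i _ => mul_comm _ _
  · exact Finset.sum_congr rfl fun i _ => Finset.sum_congr rfl fun j _ => by ring
  · exact Finset.sum_congr rfl fun i _ => by ring

theorem sum_diag_le_of_forall_le {A : Fin n → Fin n → ℝ} {M : ℝ}
    (hA : ∀ y : EuclideanSpace ℝ (Fin n), ∑ i, ∑ j, A i j * y i * y j ≤ M * ‖y‖ ^ 2) :
    ∑ i, A i i ≤ n * M :=
  calc ∑ i, A i i ≤ ∑ _i : Fin n, M := Finset.sum_le_sum fun i _ => by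
        simpa [PiLp.single_apply, mul_ite, ite_mul] using hA (EuclideanSpace.single i 1)
    _ = n * M := by simp

theorem abs_sum_mul_apply_le {b : Fin n → ℝ} {M : ℝ} (hb : ∀ i, |b i| ≤ M)
    (x : EuclideanSpace ℝ (Fin n)) : |∑ i, b i * x i| ≤ n * M * ‖x‖ :=
  calc |∑ i, b i * x i| ≤ ∑ i, |b i * x i| := Finset.abs_sum_le_sum_abs _ _
    _ ≤ ∑ _i : Fin n, M * ‖x‖ := Finset.sum_le_sum fun i _ => by
        rw [abs_mul]
        exact mul_le_mul (hb i) (PiLp.norm_apply_le x i) (abs_nonneg _)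
          ((abs_nonneg _).trans (hb i))
    _ = n * M * ‖x‖ := by simp [mul_assoc]

end Euclidean

section Comparison

variable {n : ℕ} {k : ℝ} {w : ℝ → ℝ}

theorem hasDerivAt_const_mul_profile_sub (hw : Integrable w) (C R ρ : ℝ) :
    HasDerivAt (fun ρ => C * profile k w (R - ρ))
      (-(C * (1 + k * ∫ t in (0 : ℝ)..R - ρ, w t))) ρ := by
  refine (((hasDerivAt_profile hw (R - ρ)).comp ρ
    ((hasDerivAt_id ρ).const_sub R)).const_mul C).congr_deriv ?_
  ring

theorem hasDerivAt_neg_const_mul_slope_sub (hw : Integrable w) (C R : ℝ) {ρ : ℝ}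
    (hwρ : ContinuousAt w (R - ρ)) :
    HasDerivAt (fun ρ => -(C * (1 + k * ∫ t in (0 : ℝ)..R - ρ, w t))) (C * k * w (R - ρ)) ρ := by
  refine (((hasDerivAt_primitive hw hwρ).comp ρ
    ((hasDerivAt_id ρ).const_sub R)).const_mul k |>.const_add 1 |>.const_mul C).neg.congr_deriv ?_
  ring

theorem contDiffOn_const_mul_profile_sub_norm {m : WithTop ℕ∞} {U : Set ℝ}
    (hU : ContDiffOn ℝ m (profile k w) U) (C R : ℝ) {s : Set (EuclideanSpace ℝ (Fin n))}
    (hs : ∀ x ∈ s, x ≠ 0 ∧ R - ‖x‖ ∈ U) :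
    ContDiffOn ℝ m (fun x => C * profile k w (R - ‖x‖)) s :=
  contDiffOn_const.mul <|
    hU.comp (contDiffOn_const.sub (contDiffOn_id.norm ℝ fun x hx => (hs x hx).1))
      fun x hx => (hs x hx).2

theorem ellipticOp_const_mul_profile_pos {a : Fin n → Fin n → EuclideanSpace ℝ (Fin n) → ℝ}
    {b : Fin n → EuclideanSpace ℝ (Fin n) → ℝ} {c : EuclideanSpace ℝ (Fin n) → ℝ}
    {R C : ℝ} {x : EuclideanSpace ℝ (Fin n)} (hk : k = 2 * n * (2 / R + 1) + 3)
    (hw : Integrable w) (hw0 : ∀ t, 0 ≤ w t) (hkw : k * ∫ t, w t ≤ 1) (hC : 0 < C)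
    (hxR : R / 2 < ‖x‖) (hxR' : ‖x‖ < R) (hwx : ContinuousAt w (R - ‖x‖))
    (hell : ∀ y : EuclideanSpace ℝ (Fin n),
      ‖y‖ ^ 2 ≤ ∑ i, ∑ j, a i j x * y i * y j ∧
      ∑ i, ∑ j, a i j x * y i * y j ≤ w (R - ‖x‖) * ‖y‖ ^ 2)
    (hb : ∀ i, |b i x| ≤ w (R - ‖x‖)) (hc : -c x ≤ w (R - ‖x‖) / (R - ‖x‖)) :
    0 < ellipticOp a b c (fun y => C * profile k w (R - ‖y‖)) x := by
  have hR : 0 < R := by linarith [norm_nonneg x]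
  have hk0 : 0 ≤ k := by rw [hk]; positivity
  have hx : 0 < ‖x‖ := by linarith
  rw [ellipticOp_comp_norm (norm_pos_iff.1 hx)
    (fun ρ _ => hasDerivAt_const_mul_profile_sub hw C R ρ)
    (hasDerivAt_neg_const_mul_slope_sub hw C R hwx)]
  set r := ‖x‖
  set d := R - r
  set l := w d
  set N := C * (1 + k * ∫ t in (0 : ℝ)..d, w t)
  have hd : 0 < d := by simp only [d]; linarith
  have hl : 0 ≤ l := hw0 d
  have hN : C ≤ N ∧ N ≤ 2 * C := by
    have hkP := (mul_le_mul_of_nonneg_left (primitive_le_integral hw hw0 hd.le) hk0).trans hkw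
    have hP := mul_nonneg hk0 (primitive_nonneg hw0 hd.le)
    constructor <;> nlinarith
  have hNr : 0 < N / r := div_pos (hC.trans_le hN.1) hx
  have hNr' : N / r ≤ 4 * C / R := by
    rw [div_le_div_iff₀ hx hR]; nlinarith
  have hsecond : C * k * l + N / r ≤
      (C * k * l - -N / r) / r ^ 2 * ∑ i, ∑ j, a i j x * x i * x j := by
    rw [neg_div, sub_neg_eq_add, div_mul_eq_mul_div, le_div_iff₀ (by positivity)]
    exact mul_le_mul_of_nonneg_left (hell x).1 (by positivity)
  have htrace : -(4 * C / R * (n * l)) ≤ -N / r * ∑ i, a i i x := by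
    rw [neg_div, neg_mul, neg_le_neg_iff]
    exact (mul_le_mul_of_nonneg_left (sum_diag_le_of_forall_le fun y => (hell y).2) hNr.le).trans
      (mul_le_mul_of_nonneg_right hNr' (mul_nonneg n.cast_nonneg hl))
  have hdrift : -(2 * C * (n * l)) ≤ -N / r * ∑ i, b i x * x i := by
    have hB := abs_sum_mul_apply_le hb x
    rw [neg_div, neg_mul, neg_le_neg_iff]
    calc N / r * ∑ i, b i x * x i ≤ N / r * (n * l * r) :=
          mul_le_mul_of_nonneg_left ((le_abs_self _).trans hB) hNr.le
      _ = N * (n * l) := by field_simp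
      _ ≤ 2 * C * (n * l) := mul_le_mul_of_nonneg_right hN.2 (mul_nonneg n.cast_nonneg hl)
  have hzeroth : -(2 * C * l) ≤ c x * (C * profile k w d) := by
    have hv0 : 0 ≤ C * profile k w d :=
      mul_nonneg hC.le (hd.le.trans (le_profile hk0 hw0 hd.le))
    have hv : C * profile k w d ≤ C * (2 * d) :=
      mul_le_mul_of_nonneg_left (profile_le_two_mul hw hk0 hw0 hkw hd.le) hC.le
    calc -(2 * C * l) = -(l / d) * (C * (2 * d)) := by field_simp
      _ ≤ -(l / d) * (C * profile k w d) :=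
          mul_le_mul_of_nonpos_left hv (neg_nonpos.2 (div_nonneg hl hd.le))
      _ ≤ c x * (C * profile k w d) := mul_le_mul_of_nonneg_right (by linarith) hv0
  have hkl : C * k * l = 4 * C / R * (n * l) + 2 * C * (n * l) + 2 * C * l + C * l := by
    rw [hk]; field_simp; ring
  nlinarith [mul_nonneg hC.le hl]

end Comparison

theorem stmt7_general (n : ℕ) (R m ε : ℝ) (hm : 0 < m)
    (hε : 0 < ε) (hε' : ε < min 1 (R / 2))
    (k : ℝ) (hk : k = 2 * n * (2 / R + 1) + 3)
    (Λ : ℝ → ℝ)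
    (hΛcont : ContinuousOn Λ (Set.Ioc 0 ε))
    (hΛpos : ∀ d ∈ Set.Ioc (0 : ℝ) ε, 0 < Λ d)
    (hΛint : IntegrableOn Λ (Set.Ioc 0 ε))
    (hΛsmall : (∫ s in Set.Ioc (0 : ℝ) ε, Λ s) < 1 / k)
    (Ω : Set (EuclideanSpace ℝ (Fin n)))
    (hΩ : Ω = Metric.ball (0 : EuclideanSpace ℝ (Fin n)) R \
      closure (Metric.ball (0 : EuclideanSpace ℝ (Fin n)) (R - ε)))
    (a : Fin n → Fin n → EuclideanSpace ℝ (Fin n) → ℝ)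
    (b : Fin n → EuclideanSpace ℝ (Fin n) → ℝ)
    (c : EuclideanSpace ℝ (Fin n) → ℝ)
    (hell : ∀ x ∈ Ω, ∀ y : EuclideanSpace ℝ (Fin n),
      ‖y‖ ^ 2 ≤ ∑ i, ∑ j, a i j x * y i * y j ∧
      ∑ i, ∑ j, a i j x * y i * y j ≤ Λ (R - ‖x‖) * ‖y‖ ^ 2)
    (hb : ∀ x ∈ Ω, ∀ i : Fin n, |b i x| ≤ Λ (R - ‖x‖))
    (hc : ∀ x ∈ Ω, -c x ≤ Λ (R - ‖x‖) / (R - ‖x‖))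
    (f : ℝ → ℝ)
    (hf : ∀ r, f r = r + k * ∫ s in Set.Ioc (0 : ℝ) r, ∫ t in Set.Ioc (0 : ℝ) s, Λ t) :
    ∃ v : EuclideanSpace ℝ (Fin n) → ℝ,
      -- v takes values in [0,m]
      (∀ x ∈ closure Ω, 0 ≤ v x ∧ v x ≤ m) ∧
      -- (i) boundary values and positivity
      (∀ x : EuclideanSpace ℝ (Fin n), ‖x‖ = R → v x = 0) ∧
      (∀ x : EuclideanSpace ℝ (Fin n), ‖x‖ = R - ε → v x = m) ∧
      (∀ x ∈ Ω, 0 < v x) ∧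
      -- (ii) regularity
      ContDiffOn ℝ 1 v (closure Ω) ∧ ContDiffOn ℝ 2 v Ω ∧
      -- (iii) L[v] > 0 on Ω
      (∀ x ∈ Ω, 0 <
        (∑ i, ∑ j, a i j x * pd i (pd j v) x) + (∑ i, b i x * pd i v x) + c x * v x) ∧
      -- (iv) outward normal derivative on the outer sphere equals -m/f(ε) < 0
      (∀ x : EuclideanSpace ℝ (Fin n), ‖x‖ = R →
        fderivWithin ℝ v (closure Ω) x (R⁻¹ • x) = -m / f ε) ∧
      -m / f ε < 0 := by
  obtain ⟨-, hεR⟩ := lt_min_iff.mp hε'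
  have hR : 0 < R := by linarith
  rw [ball_diff_closure_ball (by linarith)] at hΩ
  subst hΩ
  set w := (Ioc 0 ε).indicator Λ
  have hw : Integrable w := hΛint.integrable_indicator measurableSet_Ioc
  have hw0 : ∀ t, 0 ≤ w t := indicator_nonneg fun t ht => (hΛpos t ht).le
  have hwΛ : ∀ t ∈ Ioo 0 ε, w t = Λ t := fun t ht => indicator_of_mem (Ioo_subset_Ioc_self ht) Λ
  have hwcont : ContinuousOn w (Ioo 0 ε) := (hΛcont.mono Ioo_subset_Ioc_self).congr hwΛ
  have hk0 : 0 < k := by rw [hk]; positivity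
  have hkw : k * ∫ t, w t ≤ 1 := by
    rw [integral_indicator measurableSet_Ioc]; exact ((lt_div_iff₀' hk0).mp hΛsmall).le
  have hfε : f ε = profile k w ε := by rw [hf, profile_indicator_Ioc hε.le le_rfl]
  have hfε0 : 0 < f ε := hfε ▸ hε.trans_le (le_profile hk0.le hw0 hε.le)
  set C := m / f ε
  have hC : 0 < C := div_pos hm hfε0
  have hCε : C * profile k w ε = m := by rw [← hfε]; exact div_mul_cancel₀ m hfε0.ne'
  refine ⟨fun x => C * profile k w (R - ‖x‖), fun x hx => ?_, fun x hx => by simp [hx],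
    fun x hx => by simp [hx, hCε], fun x hx => ?_, ?_, ?_, fun x hx => ?_, fun x hxR => ?_,
    by rw [neg_div]; exact neg_neg_of_pos hC⟩
  · have hd : 0 ≤ R - ‖x‖ := sub_nonneg.2 (closure_shell_subset hx).2
    refine ⟨mul_nonneg hC.le (hd.trans (le_profile hk0.le hw0 hd)), hCε ▸ ?_⟩
    exact mul_le_mul_of_nonneg_left (monotoneOn_profile hw hk0.le hw0 hd hε.le
      (by linarith [(closure_shell_subset hx).1])) hC.le
  · exact mul_pos hC ((sub_pos.2 hx.2).trans_le (le_profile hk0.le hw0 (sub_pos.2 hx.2).le))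
  · refine contDiffOn_const_mul_profile_sub_norm (contDiff_profile hw).contDiffOn C R
      fun x hx => ⟨norm_pos_iff.1 (by linarith [(closure_shell_subset hx).1]), mem_univ _⟩
  · refine contDiffOn_const_mul_profile_sub_norm (contDiffOn_profile_two hw isOpen_Ioo hwcont) C R
      fun x hx => ⟨norm_pos_iff.1 (by linarith [hx.1]), by constructor <;> linarith [hx.1, hx.2]⟩
  · have hd : R - ‖x‖ ∈ Ioo 0 ε := by constructor <;> linarith [hx.1, hx.2]
    refine ellipticOp_const_mul_profile_pos hk hw hw0 hkw hC (by linarith [hx.1]) hx.2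
      (hwcont.continuousAt (isOpen_Ioo.mem_nhds hd)) ?_ ?_ ?_ <;> rw [hwΛ _ hd]
    exacts [hell x hx, hb x hx, hc x hx]
  · have hU := (uniqueDiffWithinAt_shell (r := R - ε) (by linarith) (by linarith) hxR).mono
      subset_closure
    rw [show R⁻¹ • x = ‖x‖⁻¹ • x by rw [hxR], fderivWithin_comp_norm_apply_self
      (norm_pos_iff.1 (by linarith)) (hasDerivAt_const_mul_profile_sub hw C R _) hU]
    simp [hxR, C, neg_div]

theorem stmt7 (n : ℕ) (hn : 1 ≤ n) (R m ε : ℝ) (hR : 0 < R) (hm : 0 < m)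
    (hε : 0 < ε) (hε' : ε < min 1 (R / 2))
    (k : ℝ) (hk : k = 2 * n * (2 / R + 1) + 3)
    (Λ : ℝ → ℝ)
    (hΛcont : ContinuousOn Λ (Set.Ioc 0 ε))
    (hΛmono : AntitoneOn Λ (Set.Ioc 0 ε))
    (hΛpos : ∀ d ∈ Set.Ioc (0 : ℝ) ε, 0 < Λ d)
    (hΛint : IntegrableOn Λ (Set.Ioc 0 ε))
    (hΛsmall : (∫ s in Set.Ioc (0 : ℝ) ε, Λ s) < 1 / k)
    (Ω : Set (EuclideanSpace ℝ (Fin n)))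
    (hΩ : Ω = Metric.ball (0 : EuclideanSpace ℝ (Fin n)) R \
      closure (Metric.ball (0 : EuclideanSpace ℝ (Fin n)) (R - ε)))
    (a : Fin n → Fin n → EuclideanSpace ℝ (Fin n) → ℝ)
    (b : Fin n → EuclideanSpace ℝ (Fin n) → ℝ)
    (c : EuclideanSpace ℝ (Fin n) → ℝ)
    (hell : ∀ x ∈ Ω, ∀ y : EuclideanSpace ℝ (Fin n),
      ‖y‖ ^ 2 ≤ ∑ i, ∑ j, a i j x * y i * y j ∧
      ∑ i, ∑ j, a i j x * y i * y j ≤ Λ (R - ‖x‖) * ‖y‖ ^ 2)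
    (hb : ∀ x ∈ Ω, ∀ i : Fin n, |b i x| ≤ Λ (R - ‖x‖))
    (hc : ∀ x ∈ Ω, -c x ≤ Λ (R - ‖x‖) / (R - ‖x‖))
    (f : ℝ → ℝ)
    (hf : ∀ r, f r = r + k * ∫ s in Set.Ioc (0 : ℝ) r, ∫ t in Set.Ioc (0 : ℝ) s, Λ t) :
    ∃ v : EuclideanSpace ℝ (Fin n) → ℝ,
      -- v takes values in [0,m]
      (∀ x ∈ closure Ω, 0 ≤ v x ∧ v x ≤ m) ∧
      -- (i) boundary values and positivity
      (∀ x : EuclideanSpace ℝ (Fin n), ‖x‖ = R → v x = 0) ∧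
      (∀ x : EuclideanSpace ℝ (Fin n), ‖x‖ = R - ε → v x = m) ∧
      (∀ x ∈ Ω, 0 < v x) ∧
      -- (ii) regularity
      ContDiffOn ℝ 1 v (closure Ω) ∧ ContDiffOn ℝ 2 v Ω ∧
      -- (iii) L[v] > 0 on Ω
      (∀ x ∈ Ω, 0 <
        (∑ i, ∑ j, a i j x * pd i (pd j v) x) + (∑ i, b i x * pd i v x) + c x * v x) ∧
      -- (iv) outward normal derivative on the outer sphere equals -m/f(ε) < 0
      (∀ x : EuclideanSpace ℝ (Fin n), ‖x‖ = R →
        fderivWithin ℝ v (closure Ω) x (R⁻¹ • x) = -m / f ε) ∧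
      -m / f ε < 0 :=
  stmt7_general n R m ε hm hε hε' k hk Λ hΛcont hΛpos hΛint hΛsmall Ω hΩ a b c hell hb hc f hf
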